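/- For the vector p* ∈ ℝ^d defined by p*_1 = 1, p*_2 = 1/√3, p*_j = √(2/3)/(j−1) for 3 ≤ j ≤ d, one has D_1(p*)² = D_2(p*)² = 2d/3, and D_j(p*)² < 2d/3 for every j ∈ {3,...,d}; in particular D_j(p*) ≤ D_1(p*) for all j ∈ {1,...,d}. -/

import Mathlib

def wvec (d : ℕ) (j : Fin d) : Fin d → ℕ :=
  fun i => if i < j then 0 else if i = j then (j : ℕ) + 1 else (i : ℕ)

noncomputable def G (d : ℕ) (p : Fin d → ℝ) (w : Fin d → ℕ) : ℝ :=
  (∏ i, p i) / (Real.sqrt (∑ i, ((w i : ℝ)) ^ 2 * p i ^ 2)) ^ d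

noncomputable def minG (d : ℕ) (p : Fin d → ℝ) : ℝ :=
  ⨅ j : Fin d, G d p (wvec d j)

noncomputable def D (d : ℕ) (j : Fin d) (p : Fin d → ℝ) : ℝ :=
  Real.sqrt (∑ i, ((wvec d j i : ℝ)) ^ 2 * p i ^ 2)

/-- `p*`: `p*_1 = 1`, `p*_2 = 1/√3`, `p*_j = √(2/3)/(j−1)` for `3 ≤ j ≤ d`
(0-based: index `i` has 1-based position `i+1`, so the denominator `j−1` is `i`). -/
noncomputable def pstar (d : ℕ) : Fin d → ℝ :=
  fun i => if (i : ℕ) = 0 then 1 else if (i : ℕ) = 1 then 1 / Real.sqrt 3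
    else Real.sqrt (2 / 3) / ((i : ℕ) : ℝ)

/-! In 0-based indexing, `i ^ 2 * p*_i ^ 2 = 2/3` for every `i ≥ 2`, so for `j ≥ 1` every weight
after the diagonal contributes `2/3` and `D_j(p*)² = (j+1)² p*_j² + (d-1-j) · 2/3`. The diagonal
term is `4/3` for `j = 1`, and `2(j+1)²/(3j²) < 2(j+1)/3` for `j ≥ 2`. The weights of `D_0` and
`D_1` differ only at the first two positions, whence `D_0(p)² = D_1(p)² + p_0² - 3 p_1²`, and
`p*_0² = 3 p*_1² = 1`. -/

open Finset

theorem D_sq {d : ℕ} (j : Fin d) (p : Fin d → ℝ) :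
    D d j p ^ 2 = ((j : ℝ) + 1) ^ 2 * p j ^ 2 + ∑ i ∈ Ioi j, ((i : ℕ) : ℝ) ^ 2 * p i ^ 2 := by
  have hterm : ∀ i, ((wvec d j i : ℕ) : ℝ) ^ 2 * p i ^ 2 =
      (if i = j then ((j : ℝ) + 1) ^ 2 * p j ^ 2 else 0) +
        if j < i then ((i : ℕ) : ℝ) ^ 2 * p i ^ 2 else 0 := by
    intro i
    rcases lt_trichotomy i j with h | rfl | h
    · simp [wvec, h, h.ne, h.not_gt]
    · simp [wvec]
    · simp [wvec, h, h.ne', h.not_gt]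
  rw [D, Real.sq_sqrt (sum_nonneg fun i _ => by positivity), Fintype.sum_congr _ _ hterm,
    sum_add_distrib, sum_ite_eq', ← sum_filter, filter_lt_eq_Ioi, if_pos (mem_univ j)]

theorem D_sq_eq_of_val_eq_zero {d : ℕ} (p : Fin d → ℝ) (i₀ i₁ : Fin d) (h₀ : (i₀ : ℕ) = 0)
    (h₁ : (i₁ : ℕ) = 1) : D d i₀ p ^ 2 = D d i₁ p ^ 2 + p i₀ ^ 2 - 3 * p i₁ ^ 2 := by
  have hIoi : Ioi i₀ = Ici i₁ := by
    ext i; simp only [mem_Ioi, mem_Ici, Fin.lt_def, Fin.le_def]; omega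
  rw [D_sq, D_sq, hIoi, ← sum_Ioi_add_eq_sum_Ici, h₀, h₁]
  push_cast
  ring

theorem pstar_one_sq {d : ℕ} (i : Fin d) (hi : (i : ℕ) = 1) : pstar d i ^ 2 = 1 / 3 := by
  rw [pstar, if_neg (by omega), if_pos hi, div_pow, Real.sq_sqrt (by norm_num)]
  norm_num

theorem natCast_sq_mul_pstar_sq {d : ℕ} (i : Fin d) (hi : 2 ≤ (i : ℕ)) :
    ((i : ℕ) : ℝ) ^ 2 * pstar d i ^ 2 = 2 / 3 := by
  have hi0 : ((i : ℕ) : ℝ) ≠ 0 := by positivity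
  rw [pstar, if_neg (by omega), if_neg (by omega), div_pow, Real.sq_sqrt (by norm_num)]
  field_simp

theorem sum_Ioi_pstar {d : ℕ} (j : Fin d) (hj : 1 ≤ (j : ℕ)) :
    ∑ i ∈ Ioi j, ((i : ℕ) : ℝ) ^ 2 * pstar d i ^ 2 = ((d : ℝ) - 1 - j) * (2 / 3) := by
  rw [sum_congr rfl fun i hi => natCast_sq_mul_pstar_sq i (by
      have := mem_Ioi.mp hi; rw [Fin.lt_def] at this; omega),
    sum_const, Fin.card_Ioi, nsmul_eq_mul, Nat.cast_sub (by omega), Nat.cast_sub (by omega)]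
  simp

theorem D_pstar_sq {d : ℕ} (j : Fin d) (hj : 1 ≤ (j : ℕ)) :
    D d j (pstar d) ^ 2 = ((j : ℝ) + 1) ^ 2 * pstar d j ^ 2 + ((d : ℝ) - 1 - j) * (2 / 3) := by
  rw [D_sq, sum_Ioi_pstar j hj]

theorem D_pstar_sq_of_val_eq_one {d : ℕ} (j : Fin d) (hj : (j : ℕ) = 1) :
    D d j (pstar d) ^ 2 = 2 * (d : ℝ) / 3 := by
  rw [D_pstar_sq j hj.ge, pstar_one_sq j hj, hj]
  push_cast
  ring

theorem D_pstar_sq_of_val_eq_zero {d : ℕ} (hd : 2 ≤ d) (j : Fin d) (hj : (j : ℕ) = 0) :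
    D d j (pstar d) ^ 2 = 2 * (d : ℝ) / 3 := by
  have h₁ : ((⟨1, hd⟩ : Fin d) : ℕ) = 1 := rfl
  rw [D_sq_eq_of_val_eq_zero _ j _ hj h₁, D_pstar_sq_of_val_eq_one _ h₁, pstar_one_sq _ h₁, pstar,
    if_pos hj]
  ring

theorem D_pstar_sq_lt {d : ℕ} (j : Fin d) (hj : 2 ≤ (j : ℕ)) :
    D d j (pstar d) ^ 2 < 2 * (d : ℝ) / 3 := by
  have hj' : (2 : ℝ) ≤ j := by exact_mod_cast hj
  have hdiag : ((j : ℝ) + 1) ^ 2 * pstar d j ^ 2 < ((j : ℝ) + 1) * (2 / 3) := by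
    have h := natCast_sq_mul_pstar_sq j hj
    -- equivalent to `j + 1 < j ^ 2`
    nlinarith
  rw [D_pstar_sq j (by omega)]
  linarith

/-- For `p*`: `D_1(p*)² = D_2(p*)² = 2d/3`, `D_j(p*)² < 2d/3` for `j ∈ {3,…,d}`,
and in particular `D_j(p*) ≤ D_1(p*)` for all `j`. -/
theorem stmt11 (d : ℕ) (hd : 2 ≤ d) :
    D d ⟨0, by omega⟩ (pstar d) ^ 2 = 2 * (d : ℝ) / 3 ∧
      D d ⟨1, by omega⟩ (pstar d) ^ 2 = 2 * (d : ℝ) / 3 ∧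
      (∀ j : Fin d, 2 ≤ (j : ℕ) → D d j (pstar d) ^ 2 < 2 * (d : ℝ) / 3) ∧
      ∀ j : Fin d, D d j (pstar d) ≤ D d ⟨0, by omega⟩ (pstar d) := by
  refine ⟨D_pstar_sq_of_val_eq_zero hd _ rfl, D_pstar_sq_of_val_eq_one _ rfl, D_pstar_sq_lt,
    fun j => ?_⟩
  have hsq : D d j (pstar d) ^ 2 ≤ 2 * (d : ℝ) / 3 := by
    rcases j with ⟨_ | _ | k, _⟩
    · exact (D_pstar_sq_of_val_eq_zero hd _ rfl).le
    · exact (D_pstar_sq_of_val_eq_one _ rfl).le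
    · exact (D_pstar_sq_lt _ (by simp)).le
  rw [← D_pstar_sq_of_val_eq_zero hd ⟨0, by omega⟩ rfl] at hsq
  exact (pow_le_pow_iff_left₀ (Real.sqrt_nonneg _) (Real.sqrt_nonneg _) two_ne_zero).mp hsq
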